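/- Define c_n = n^{−2} · log₂(2^n ∏_{k=1}^{n}(2^k+1)) for integers n ≥ 1. Then the sequence (c_n) is strictly decreasing, i.e., c_{n+1} < c_n for all n ≥ 1, and c_n < 0.74 for all n ≥ 7. -/

import Mathlib

/-- The number of pure `n`-qubit stabilizer states: `2^n ∏_{k=1}^n (2^k + 1)`. -/
def stabCount (n : ℕ) : ℕ := 2 ^ n * ∏ k ∈ Finset.Icc 1 n, (2 ^ k + 1)

/-- `c_n = n^{−2} log₂(2^n ∏_{k=1}^n (2^k+1))`. -/
noncomputable def cSeq (n : ℕ) : ℝ := Real.logb 2 (stabCount n) / (n : ℝ) ^ 2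

/-!
Write `L n = log₂ (stabCount n)`, so `cSeq n = L n / n²`. Since
`stabCount (n + 1) = 2 (2^(n+1) + 1) stabCount n`, the increments satisfy
`n + 2 < L (n + 1) - L n < n + 3`. Summing the lower bound gives `L n ≥ n (n + 3) / 2`,
and `L (n + 1) n² < L n (n + 1)²` then follows from `L (n + 1) < L n + n + 3`
because `(n + 3) n² ≤ (2n + 1) L n`. For `n ≥ 7` monotonicity reduces the bound to
`c₇ < 0.74`, i.e. `stabCount 7 ^ 50 < 2 ^ 1813`, which is a finite computation.
-/

open Real

lemma logb_two_pow (m : ℕ) : logb 2 ((2 : ℝ) ^ m) = m := by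
  rw [logb_pow, logb_self_eq_one one_lt_two, mul_one]

lemma logb_lt_div_of_pow_lt {b x : ℝ} {p q : ℕ} (hb : 1 < b) (hx : 0 < x) (hq : 0 < q)
    (h : x ^ q < b ^ p) : logb b x < p / q := by
  have := logb_lt_logb hb (pow_pos hx q) h
  rw [logb_pow, logb_pow, logb_self_eq_one hb, mul_one] at this
  rw [lt_div_iff₀ (by exact_mod_cast hq)]
  linarith

lemma lt_logb_two_pow_add_one (m : ℕ) : (m : ℝ) < logb 2 (2 ^ m + 1) := by
  simpa [logb_two_pow] using logb_lt_logb one_lt_two (by positivity) (lt_add_one ((2 : ℝ) ^ m))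

lemma logb_two_pow_add_one_lt {m : ℕ} (hm : 1 ≤ m) : logb 2 ((2 : ℝ) ^ m + 1) < m + 1 := by
  have h : (2 : ℝ) ^ m + 1 < 2 ^ (m + 1) := by
    have : (2 : ℝ) ≤ 2 ^ m := by simpa using pow_le_pow_right₀ one_le_two hm
    rw [pow_succ]
    linarith
  simpa [logb_two_pow] using logb_lt_logb one_lt_two (by positivity) h

lemma stabCount_pos (n : ℕ) : 0 < stabCount n :=
  Nat.mul_pos (by positivity) (Finset.prod_pos fun _ _ => by positivity)

lemma stabCount_succ (n : ℕ) : stabCount (n + 1) = stabCount n * (2 * (2 ^ (n + 1) + 1)) := by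
  rw [stabCount, stabCount, Finset.prod_Icc_succ_top (by omega)]
  ring

lemma logb_stabCount_succ (n : ℕ) :
    logb 2 (stabCount (n + 1)) = logb 2 (stabCount n) + 1 + logb 2 ((2 : ℝ) ^ (n + 1) + 1) := by
  have hS : (stabCount n : ℝ) ≠ 0 := by exact_mod_cast (stabCount_pos n).ne'
  have hcast : (stabCount (n + 1) : ℝ) = stabCount n * (2 * (2 ^ (n + 1) + 1)) := by
    rw [stabCount_succ]
    push_cast
    ring
  rw [hcast, logb_mul hS (by positivity), logb_mul two_ne_zero (by positivity),
    logb_self_eq_one one_lt_two]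
  ring

lemma logb_stabCount_succ_lt (n : ℕ) :
    logb 2 (stabCount (n + 1)) < logb 2 (stabCount n) + n + 3 := by
  have := logb_two_pow_add_one_lt (Nat.le_add_left 1 n)
  rw [logb_stabCount_succ]
  push_cast at this
  linarith

lemma logb_stabCount_succ_gt (n : ℕ) :
    logb 2 (stabCount n) + n + 2 < logb 2 (stabCount (n + 1)) := by
  have := lt_logb_two_pow_add_one (n + 1)
  rw [logb_stabCount_succ]
  push_cast at this
  linarith

lemma logb_stabCount_ge (n : ℕ) : (n : ℝ) * (n + 3) / 2 ≤ logb 2 (stabCount n) := by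
  induction n with
  | zero => simp [stabCount]
  | succ n ih =>
    have := logb_stabCount_succ_gt n
    push_cast
    linarith

lemma cSeq_succ_lt {n : ℕ} (hn : 1 ≤ n) : cSeq (n + 1) < cSeq n := by
  have hn' : (0 : ℝ) < n := by exact_mod_cast hn
  have hstep := mul_lt_mul_of_pos_right (logb_stabCount_succ_lt n) (pow_pos hn' 2)
  have hgrowth : (n : ℝ) ^ 2 * (n + 3) ≤ (2 * n + 1) * logb 2 (stabCount n) := by
    have hL := mul_le_mul_of_nonneg_left (logb_stabCount_ge n) (by positivity : (0 : ℝ) ≤ 2 * n + 1)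
    nlinarith
  rw [cSeq, cSeq, div_lt_div_iff₀ (by positivity) (by positivity)]
  push_cast
  linarith

lemma stabCount_seven : stabCount 7 = 81284860800 := by
  decide

lemma cSeq_seven_lt : cSeq 7 < 0.74 := by
  have h : logb 2 (stabCount 7) < (1813 : ℕ) / (50 : ℕ) := by
    refine logb_lt_div_of_pow_lt one_lt_two (by exact_mod_cast stabCount_pos 7) (by norm_num) ?_
    rw [stabCount_seven]
    exact_mod_cast (by decide +kernel : (81284860800 : ℕ) ^ 50 < 2 ^ 1813)
  rw [cSeq, div_lt_iff₀ (by norm_num)]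
  norm_num at h ⊢
  linarith

/-- The sequence `c_n = n^{−2} log₂(2^n ∏_{k=1}^n (2^k+1))`
is strictly decreasing, and `c_n < 0.74` for all `n ≥ 7`. -/
theorem cSeq_strict_anti_and_lt :
    (∀ n : ℕ, 1 ≤ n → cSeq (n + 1) < cSeq n) ∧
    (∀ n : ℕ, 7 ≤ n → cSeq n < 0.74) := by
  refine ⟨fun n => cSeq_succ_lt, fun n hn => ?_⟩
  have hanti : AntitoneOn cSeq {x | 7 ≤ x} :=
    antitoneOn_nat_Ici_of_succ_le fun m hm => (cSeq_succ_lt (by omega)).le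
  exact (hanti (le_refl 7) hn hn).trans_lt cSeq_seven_lt
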